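/- Let d ≥ 2, α > 0, and f(r, d, α) = ∫_0^π sin^d θ / (r² + 1 − 2r cos θ)^{(d+α)/2} dθ. Then for every integer n ≥ 0, the 2n-th derivative of f in r at 0 equals B(1/2,(d+1)/2) · (2n−1)!! · α(α+2)⋯(α+2n−2) · [(d+α)(d+α+2)⋯(d+α+2n−2)] / [(d+2)(d+4)⋯(d+2n)]. In particular ∂_r^{2n} f(0,d,α) > 0 for all n ≥ 0. -/

import Mathlib

/-!
Put `J(d, q)(s) = ∫₀^π sin^d θ · w(s, θ)^q` with `w(s, θ) = s² + 1 − 2 s cos θ`, so that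
`f(s, d, α) = J(d, −(d + α)/2)(s)`. For `|s| < 1` we have `w > 0`, the integrand is smooth in `s`,
and differentiating twice under the integral sign, with `(2s − 2 cos θ)² = 4(w − sin² θ)`, gives
`∂²_s J(d, q) = (4q² − 2q) J(d, q − 1) − 4q(q − 1) J(d + 2, q − 2)`. In terms of `α` this is
`∂² f(d, α) = (d + α)[(d + α + 1) f(d, α + 2) − (d + α + 2) f(d + 2, α + 2)]`. Iterating it `n`
times at `s = 0`, where `f(0, d, α) = ∫₀^π sin^d θ dθ = B(1/2, (d + 1)/2)` obeys Wallis' recursion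
`B(d + 2) = (d + 1)/(d + 2) · B(d)`, produces the closed form.
-/

open Real Set Filter Topology intervalIntegral

lemma hasDerivAt_intervalIntegral_of_continuousOn {E : Type*} [NormedAddCommGroup E]
    [NormedSpace ℝ E] {F F' : ℝ → ℝ → E} {U : Set ℝ} {a b x₀ : ℝ} (hU : IsOpen U)
    (hx₀ : x₀ ∈ U) (hF : ContinuousOn (fun p : ℝ × ℝ => F p.1 p.2) (U ×ˢ univ))
    (hF' : ContinuousOn (fun p : ℝ × ℝ => F' p.1 p.2) (U ×ˢ univ))
    (hderiv : ∀ x ∈ U, ∀ t, HasDerivAt (F · t) (F' x t) x) :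
    HasDerivAt (fun x => ∫ t in a..b, F x t) (∫ t in a..b, F' x₀ t) x₀ := by
  have slice {G : ℝ → ℝ → E} (hG : ContinuousOn (fun p : ℝ × ℝ => G p.1 p.2) (U ×ˢ univ))
      {x : ℝ} (hx : x ∈ U) : Continuous (G x) :=
    hG.comp_continuous (.prodMk_right x) fun t => ⟨hx, mem_univ t⟩
  obtain ⟨δ, hδ, hball⟩ := Metric.isOpen_iff.mp hU x₀ hx₀
  have hK : IsCompact (Metric.closedBall x₀ (δ / 2) ×ˢ uIcc a b) :=
    (isCompact_closedBall x₀ _).prod isCompact_uIcc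
  have hKU : Metric.closedBall x₀ (δ / 2) ⊆ U :=
    (Metric.closedBall_subset_ball (half_lt_self hδ)).trans hball
  obtain ⟨C, hC⟩ := hK.exists_bound_of_continuousOn
    (hF'.mono (prod_mono hKU (subset_univ _)))
  have hsU : Metric.ball x₀ (δ / 2) ⊆ U := Metric.ball_subset_closedBall.trans hKU
  refine (intervalIntegral.hasDerivAt_integral_of_dominated_loc_of_deriv_le (bound := fun _ => C)
    (Metric.ball_mem_nhds x₀ (half_pos hδ)) ?_ ((slice hF hx₀).intervalIntegrable _ _)
    (slice hF' hx₀).aestronglyMeasurable ?_ intervalIntegrable_const ?_).2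
  · filter_upwards [hU.mem_nhds hx₀] with x hx using (slice hF hx).aestronglyMeasurable
  · exact .of_forall fun t ht x hx =>
      hC (x, t) ⟨Metric.ball_subset_closedBall hx, uIoc_subset_uIcc ht⟩
  · exact .of_forall fun t _ x hx => hderiv x (hsU hx) t

lemma contDiffOn_succ_of_hasDerivAt {f f' : ℝ → ℝ} {U : Set ℝ} {n : ℕ} (hU : IsOpen U)
    (hf : ∀ x ∈ U, HasDerivAt f (f' x) x) (hf' : ContDiffOn ℝ n f' U) :
    ContDiffOn ℝ (n + 1) f U := by
  rw [contDiffOn_succ_iff_deriv_of_isOpen hU]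
  exact ⟨fun x hx => (hf x hx).differentiableAt.differentiableWithinAt, by simp,
    hf'.congr fun x hx => (hf x hx).deriv⟩

noncomputable def distSq (s θ : ℝ) : ℝ := s ^ 2 + 1 - 2 * s * cos θ

lemma distSq_pos {s : ℝ} (hs : s ∈ Ioo (-1) 1) (θ : ℝ) : 0 < distSq s θ := by
  have hs' := abs_lt.mpr hs
  have hc : |s * cos θ| ≤ |s| := by
    rw [abs_mul]; exact mul_le_of_le_one_right (abs_nonneg s) (abs_cos_le_one θ)
  unfold distSq
  nlinarith [le_abs_self (s * cos θ), sq_abs s, abs_nonneg s]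

@[fun_prop]
lemma continuous_distSq : Continuous fun p : ℝ × ℝ => distSq p.1 p.2 := by
  unfold distSq; fun_prop

lemma hasDerivAt_distSq (s θ : ℝ) :
    HasDerivAt (distSq · θ) (2 * s - 2 * cos θ) s := by
  simpa [distSq] using ((hasDerivAt_pow 2 s).add_const 1).fun_sub
    (((hasDerivAt_id s).const_mul 2).mul_const (cos θ))

noncomputable def J (d : ℕ) (q s : ℝ) : ℝ :=
  ∫ θ in 0..π, sin θ ^ d * distSq s θ ^ q

noncomputable def dJ (d : ℕ) (q s : ℝ) : ℝ :=
  ∫ θ in 0..π, sin θ ^ d * (q * distSq s θ ^ (q - 1) * (2 * s - 2 * cos θ))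

section

variable {d : ℕ} {q s : ℝ}

lemma hasDerivAt_J (hs : s ∈ Ioo (-1) 1) : HasDerivAt (J d q) (dJ d q s) s := by
  unfold J dJ
  apply hasDerivAt_intervalIntegral_of_continuousOn isOpen_Ioo hs
  · exact continuousOn_of_forall_continuousAt fun p hp => by
      fun_prop (disch := exact Or.inl (distSq_pos hp.1 p.2).ne')
  · exact continuousOn_of_forall_continuousAt fun p hp => by
      fun_prop (disch := exact Or.inl (distSq_pos hp.1 p.2).ne')
  · intro x hx θ
    refine (((hasDerivAt_distSq x θ).rpow_const (p := q)
      (Or.inl (distSq_pos hx θ).ne')).const_mul (sin θ ^ d)).congr_deriv ?_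
    ring

lemma hasDerivAt_dJ_integrand (hs : s ∈ Ioo (-1) 1) (θ : ℝ) :
    HasDerivAt (fun x => sin θ ^ d * (q * distSq x θ ^ (q - 1) * (2 * x - 2 * cos θ)))
      ((4 * q ^ 2 - 2 * q) * (sin θ ^ d * distSq s θ ^ (q - 1)) -
        4 * q * (q - 1) * (sin θ ^ (d + 2) * distSq s θ ^ (q - 2))) s := by
  have hw := distSq_pos hs θ
  have hpow := ((hasDerivAt_distSq s θ).rpow_const (p := q - 1) (Or.inl hw.ne'))
  have hlin : HasDerivAt (fun x => 2 * x - 2 * cos θ) 2 s := by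
    simpa using ((hasDerivAt_id s).const_mul 2).sub_const (2 * cos θ)
  refine (((hpow.const_mul q).fun_mul hlin).const_mul (sin θ ^ d)).congr_deriv ?_
  have hsq : (2 * s - 2 * cos θ) ^ 2 = 4 * (distSq s θ - sin θ ^ 2) := by
    rw [distSq]; linear_combination 4 * sin_sq_add_cos_sq θ
  rw [show q - 1 - 1 = q - 2 by ring, show q - 1 = q - 2 + 1 by ring, rpow_add_one hw.ne']
  linear_combination (q * (q - 1) * sin θ ^ d * distSq s θ ^ (q - 2)) * hsq

lemma continuous_sin_pow_mul_distSq_rpow (hs : s ∈ Ioo (-1) 1) (d : ℕ) (q : ℝ) :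
    Continuous fun θ => sin θ ^ d * distSq s θ ^ q :=
  continuous_iff_continuousAt.2 fun θ => by fun_prop (disch := exact Or.inl (distSq_pos hs θ).ne')

lemma hasDerivAt_dJ (hs : s ∈ Ioo (-1) 1) :
    HasDerivAt (dJ d q)
      ((4 * q ^ 2 - 2 * q) * J d (q - 1) s - 4 * q * (q - 1) * J (d + 2) (q - 2) s) s := by
  have h : HasDerivAt (dJ d q)
      (∫ θ in 0..π, (4 * q ^ 2 - 2 * q) * (sin θ ^ d * distSq s θ ^ (q - 1)) -
        4 * q * (q - 1) * (sin θ ^ (d + 2) * distSq s θ ^ (q - 2))) s := by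
    apply hasDerivAt_intervalIntegral_of_continuousOn isOpen_Ioo hs
    · exact continuousOn_of_forall_continuousAt fun p hp => by
        fun_prop (disch := exact Or.inl (distSq_pos hp.1 p.2).ne')
    · exact continuousOn_of_forall_continuousAt fun p hp => by
        fun_prop (disch := exact Or.inl (distSq_pos hp.1 p.2).ne')
    · exact fun x hx θ => hasDerivAt_dJ_integrand hx θ
  rwa [integral_sub, integral_const_mul, integral_const_mul] at h
  all_goals exact ((continuous_sin_pow_mul_distSq_rpow hs _ _).const_mul _).intervalIntegrable _ _

lemma contDiffOn_J (n : ℕ) (d : ℕ) (q : ℝ) : ContDiffOn ℝ n (J d q) (Ioo (-1) 1) := by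
  suffices h : ∀ d q, ContDiffOn ℝ n (J d q) (Ioo (-1) 1) ∧ ContDiffOn ℝ n (dJ d q) (Ioo (-1) 1)
    from (h d q).1
  induction n with
  | zero =>
    exact fun d q =>
      ⟨contDiffOn_zero.2 fun s hs => (hasDerivAt_J hs).continuousAt.continuousWithinAt,
        contDiffOn_zero.2 fun s hs => (hasDerivAt_dJ hs).continuousAt.continuousWithinAt⟩
  | succ n ih =>
    refine fun d q => ⟨contDiffOn_succ_of_hasDerivAt isOpen_Ioo (fun s => hasDerivAt_J) (ih d q).2,
      contDiffOn_succ_of_hasDerivAt isOpen_Ioo (fun s => hasDerivAt_dJ) ?_⟩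
    exact (contDiffOn_const.mul (ih d (q - 1)).1).sub (contDiffOn_const.mul (ih (d + 2) (q - 2)).1)

lemma iteratedDeriv_J_add_two (m : ℕ) (hs : s ∈ Ioo (-1) 1) :
    iteratedDeriv (m + 2) (J d q) s = (4 * q ^ 2 - 2 * q) * iteratedDeriv m (J d (q - 1)) s -
      4 * q * (q - 1) * iteratedDeriv m (J (d + 2) (q - 2)) s := by
  have hderiv2 : deriv (deriv (J d q)) =ᶠ[𝓝 s]
      fun x => (4 * q ^ 2 - 2 * q) * J d (q - 1) x - 4 * q * (q - 1) * J (d + 2) (q - 2) x := by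
    filter_upwards [isOpen_Ioo.mem_nhds hs] with x hx
    have hJ : deriv (J d q) =ᶠ[𝓝 x] dJ d q := by
      filter_upwards [isOpen_Ioo.mem_nhds hx] with y hy using (hasDerivAt_J hy).deriv
    rw [hJ.deriv_eq, (hasDerivAt_dJ hx).deriv]
  have hsmooth (d : ℕ) (q : ℝ) : ContDiffAt ℝ m (J d q) s :=
    (contDiffOn_J m d q).contDiffAt (isOpen_Ioo.mem_nhds hs)
  rw [iteratedDeriv_succ', iteratedDeriv_succ', hderiv2.iteratedDeriv_eq,
    iteratedDeriv_fun_sub (contDiffAt_const.mul (hsmooth _ _)) (contDiffAt_const.mul (hsmooth _ _)),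
    iteratedDeriv_const_mul_field, iteratedDeriv_const_mul_field]

end

lemma integral_sin_pow_add_two (d : ℕ) :
    ∫ θ in 0..π, sin θ ^ (d + 2) = (d + 1) / (d + 2) * ∫ θ in 0..π, sin θ ^ d := by
  simp [integral_sin_pow]

lemma integral_sin_pow_eq_Gamma (d : ℕ) :
    ∫ θ in 0..π, sin θ ^ d =
      Gamma (1 / 2) * Gamma ((d + 1) / 2) / Gamma (1 / 2 + (d + 1) / 2) := by
  induction d using Nat.twoStepInduction with
  | zero => norm_num [Gamma_one_half_eq, mul_self_sqrt pi_pos.le]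
  | one =>
    norm_num
    rw [show (3 : ℝ) / 2 = 1 / 2 + 1 by norm_num, Gamma_add_one (by norm_num)]
    field_simp [(Gamma_pos_of_pos (by norm_num : (0 : ℝ) < 1 / 2)).ne']
  | more d ih _ =>
    have hd : (0 : ℝ) < (d + 1) / 2 := by positivity
    rw [integral_sin_pow_add_two, ih]
    push_cast
    rw [show ((d : ℝ) + 2 + 1) / 2 = (d + 1) / 2 + 1 by ring,
      show 1 / 2 + ((d + 1) / 2 + 1) = (1 / 2 + (d + 1) / 2 : ℝ) + 1 by ring,
      Gamma_add_one hd.ne', Gamma_add_one (by positivity)]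
    field_simp [(Gamma_pos_of_pos (by positivity : (0 : ℝ) < 1 / 2 + (d + 1) / 2)).ne']
    ring

noncomputable def risingByTwo (x : ℝ) (n : ℕ) : ℝ := ∏ k ∈ Finset.range n, (x + 2 * k)

lemma risingByTwo_succ (x : ℝ) (n : ℕ) :
    risingByTwo x (n + 1) = risingByTwo x n * (x + 2 * n) :=
  Finset.prod_range_succ _ n

lemma risingByTwo_succ' (x : ℝ) (n : ℕ) : risingByTwo x (n + 1) = x * risingByTwo (x + 2) n := by
  rw [risingByTwo, Finset.prod_range_succ', risingByTwo, mul_comm]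
  congr 1
  · simp
  · exact Finset.prod_congr rfl fun k _ => by push_cast; ring

lemma risingByTwo_shift (x : ℝ) (n : ℕ) :
    x * risingByTwo (x + 2) n = risingByTwo x n * (x + 2 * n) := by
  rw [← risingByTwo_succ, risingByTwo_succ']

lemma risingByTwo_pos {x : ℝ} (hx : 0 < x) (n : ℕ) : 0 < risingByTwo x n :=
  Finset.prod_pos fun k _ => by positivity

noncomputable def evenDerivCoeff (d : ℕ) (α : ℝ) (n : ℕ) : ℝ :=
  (∫ θ in 0..π, sin θ ^ d) * risingByTwo 1 n * risingByTwo α n * risingByTwo (d + α) n /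
    risingByTwo (d + 2) n

lemma evenDerivCoeff_succ (d : ℕ) (α : ℝ) (n : ℕ) :
    evenDerivCoeff d α (n + 1) = (d + α) * (d + α + 1) * evenDerivCoeff d (α + 2) n -
      (d + α) * (d + α + 2) * evenDerivCoeff (d + 2) (α + 2) n := by
  have hC := risingByTwo_shift (d + α + 2) n
  have hD := risingByTwo_shift (d + 2) n
  have hD₀ := risingByTwo_pos (by positivity : (0 : ℝ) < d + 2) n
  have hD₂ := risingByTwo_pos (by positivity : (0 : ℝ) < d + 2 + 2) n
  unfold evenDerivCoeff
  rw [integral_sin_pow_add_two, risingByTwo_succ 1, risingByTwo_succ' α,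
    risingByTwo_succ' (d + α), risingByTwo_succ (d + 2)]
  push_cast
  rw [show (d : ℝ) + (α + 2) = d + α + 2 by ring,
    show (d : ℝ) + 2 + (α + 2) = d + α + 2 + 2 by ring]
  field_simp
  set W := ∫ θ in 0..π, sin θ ^ d
  -- after the shifts `hC`, `hD` what remains is
  -- `(d + 2 + 2n)(d + α + 1) − (d + 1)(d + α + 2 + 2n) = α (2n + 1)`
  linear_combination (W * risingByTwo 1 n * risingByTwo (α + 2) n * (d + α) * (d + 2 + 2 * n) *
      risingByTwo (d + 2) n * (d + 1)) * hC -
    (W * risingByTwo 1 n * risingByTwo (α + 2) n * (d + α) * (d + 1) * risingByTwo (d + α + 2) n *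
      (d + α + 2 + 2 * n)) * hD

lemma evenDerivCoeff_pos {d : ℕ} {α : ℝ} (hα : 0 < α) (n : ℕ) : 0 < evenDerivCoeff d α n :=
  div_pos (mul_pos (mul_pos (mul_pos (integral_sin_pow_pos d) (risingByTwo_pos one_pos n))
    (risingByTwo_pos hα n)) (risingByTwo_pos (by positivity) n)) (risingByTwo_pos (by positivity) n)

lemma iteratedDeriv_two_mul_J_zero (d : ℕ) (α : ℝ) (n : ℕ) :
    iteratedDeriv (2 * n) (J d (-((d + α) / 2))) 0 = evenDerivCoeff d α n := by
  induction n generalizing d α with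
  | zero => simp [J, distSq, evenDerivCoeff, risingByTwo]
  | succ n ih =>
    rw [show 2 * (n + 1) = 2 * n + 2 by ring,
      iteratedDeriv_J_add_two _ (by norm_num : (0 : ℝ) ∈ Ioo (-1) 1),
      show -((d + α) / 2) - 1 = -((d + (α + 2)) / 2) by ring,
      show -((d + α) / 2) - 2 = -((((d + 2 : ℕ) : ℝ) + (α + 2)) / 2) by push_cast; ring,
      ih, ih, evenDerivCoeff_succ]
    ring

theorem stmt_5_general (d : ℕ) (α : ℝ) (hα : 0 < α) (n : ℕ) :
    iteratedDeriv (2 * n) (fun s : ℝ =>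
        ∫ θ in (0:ℝ)..π,
          Real.sin θ ^ d / (s ^ 2 + 1 - 2 * s * Real.cos θ) ^ (((d : ℝ) + α) / 2)) 0
      = (Real.Gamma (1 / 2) * Real.Gamma (((d : ℝ) + 1) / 2) /
            Real.Gamma (1 / 2 + ((d : ℝ) + 1) / 2)) *
          (∏ k ∈ Finset.range n, ((2 * (k : ℝ) + 1))) *
          (∏ k ∈ Finset.range n, (α + 2 * (k : ℝ))) *
          (∏ k ∈ Finset.range n, ((d : ℝ) + α + 2 * (k : ℝ))) /
          (∏ k ∈ Finset.range n, ((d : ℝ) + 2 * ((k : ℝ) + 1)))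
    ∧ 0 < iteratedDeriv (2 * n) (fun s : ℝ =>
        ∫ θ in (0:ℝ)..π,
          Real.sin θ ^ d / (s ^ 2 + 1 - 2 * s * Real.cos θ) ^ (((d : ℝ) + α) / 2)) 0 := by
  have hJ : (fun s : ℝ => ∫ θ in (0:ℝ)..π,
      sin θ ^ d / (s ^ 2 + 1 - 2 * s * cos θ) ^ (((d : ℝ) + α) / 2)) =ᶠ[𝓝 0]
      J d (-((d + α) / 2)) := by
    filter_upwards [Ioo_mem_nhds (by norm_num : (-1 : ℝ) < 0) one_pos] with s hs
    refine integral_congr fun θ _ => ?_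
    rw [rpow_neg (distSq_pos hs θ).le, div_eq_mul_inv]
    rfl
  rw [hJ.iteratedDeriv_eq, iteratedDeriv_two_mul_J_zero]
  refine ⟨?_, evenDerivCoeff_pos hα n⟩
  have hodd : risingByTwo 1 n = ∏ k ∈ Finset.range n, (2 * (k : ℝ) + 1) :=
    Finset.prod_congr rfl fun k _ => by ring
  have hden : risingByTwo (d + 2) n = ∏ k ∈ Finset.range n, ((d : ℝ) + 2 * ((k : ℝ) + 1)) :=
    Finset.prod_congr rfl fun k _ => by ring
  rw [evenDerivCoeff, integral_sin_pow_eq_Gamma, hodd, hden]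
  rfl

/-- Explicit formula and positivity for the even derivatives of f(·,d,α) at 0. -/
theorem stmt_5 (d : ℕ) (hd : 2 ≤ d) (α : ℝ) (hα : 0 < α) (n : ℕ) :
    iteratedDeriv (2 * n) (fun s : ℝ =>
        ∫ θ in (0:ℝ)..π,
          Real.sin θ ^ d / (s ^ 2 + 1 - 2 * s * Real.cos θ) ^ (((d : ℝ) + α) / 2)) 0
      = (Real.Gamma (1 / 2) * Real.Gamma (((d : ℝ) + 1) / 2) /
            Real.Gamma (1 / 2 + ((d : ℝ) + 1) / 2)) *
          (∏ k ∈ Finset.range n, ((2 * (k : ℝ) + 1))) *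
          (∏ k ∈ Finset.range n, (α + 2 * (k : ℝ))) *
          (∏ k ∈ Finset.range n, ((d : ℝ) + α + 2 * (k : ℝ))) /
          (∏ k ∈ Finset.range n, ((d : ℝ) + 2 * ((k : ℝ) + 1)))
    ∧ 0 < iteratedDeriv (2 * n) (fun s : ℝ =>
        ∫ θ in (0:ℝ)..π,
          Real.sin θ ^ d / (s ^ 2 + 1 - 2 * s * Real.cos θ) ^ (((d : ℝ) + α) / 2)) 0 :=
  stmt_5_general d α hα n
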